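/- arXiv:2504.13591 — 3 statements merged into one kernel-verified Lean document; each statement's English description precedes it below -/
import Mathlib

section
/- If r and n are positive integers with r > n²/4, then some coefficient of the formal power series expansion of 1/(1 - n·z + r·z²) is negative. -/
open Real

/-- If `r > n²/4` (with `n, r` positive integers), then some coefficient of the
power series expansion of `1/(1 - n z + r z²)` is negative. -/
theorem stmt1 (n r : ℕ) (hn : 0 < n) (hr : 0 < r)
    (hlt : (n : ℝ) ^ 2 < 4 * (r : ℝ))
    (a : ℕ → ℝ) (h0 : a 0 = 1) (h1 : a 1 = n)
    (hrec : ∀ k, a (k + 2) = n * a (k + 1) - r * a k) :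
    ∃ k, a k < 0 := by
  have hrpos : (0:ℝ) < r := by exact_mod_cast hr
  have hsr : (0:ℝ) < Real.sqrt r := Real.sqrt_pos.mpr hrpos
  set s := Real.sqrt r with hs
  have hs2 : s ^ 2 = r := Real.sq_sqrt hrpos.le
  have hnpos : (0:ℝ) < n := by exact_mod_cast hn
  have hclt : (n:ℝ) < 2 * s := by nlinarith [hs2, hsr]
  set c := (n:ℝ) / (2 * s) with hc
  have hc0 : 0 < c := div_pos hnpos (by linarith)
  have hc1 : c < 1 := (div_lt_one (by linarith)).mpr hclt
  set θ := Real.arccos c with hθ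
  have hcos : Real.cos θ = c := Real.cos_arccos (by linarith) hc1.le
  have hθ0 : 0 < θ := Real.arccos_pos.mpr hc1
  have hθπ2 : θ < π / 2 := Real.arccos_lt_pi_div_two.mpr hc0
  have hsin : 0 < Real.sin θ := Real.sin_pos_of_pos_of_lt_pi hθ0 (by linarith [Real.pi_pos])
  have hn2 : (n:ℝ) = 2 * s * Real.cos θ := by
    rw [hcos, hc]; field_simp
  have key : ∀ k : ℕ, a k * Real.sin θ = s ^ k * Real.sin (((k:ℝ) + 1) * θ) ∧
      a (k+1) * Real.sin θ = s ^ (k+1) * Real.sin (((k:ℝ) + 2) * θ) := by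
    intro k
    induction k with
    | zero =>
      constructor
      · simp [h0]
      · rw [h1, hn2]
        push_cast
        rw [show ((0:ℝ)+2)*θ = θ + θ by ring, Real.sin_add]
        ring
    | succ k ih =>
      have e1 := ih.1
      have e2 := ih.2
      constructor
      · rw [e2]; push_cast; ring_nf
      · rw [hrec k]
        have hsin3 : Real.sin (((k:ℝ) + 3) * θ) =
            2 * Real.cos θ * Real.sin (((k:ℝ) + 2) * θ) - Real.sin (((k:ℝ) + 1) * θ) := by
          rw [show ((k:ℝ) + 3) * θ = ((k:ℝ)+2)*θ + θ by ring,
              show ((k:ℝ) + 1) * θ = ((k:ℝ)+2)*θ - θ by ring,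
              Real.sin_add, Real.sin_sub]
          ring
        push_cast
        rw [show ((k:ℝ)+1+2)*θ = ((k:ℝ)+3)*θ by ring, hsin3, hn2, ← hs2]
        linear_combination (2*s*Real.cos θ) * e2 - s^2 * e1
  set m := Nat.floor (π / θ) with hm
  refine ⟨m, ?_⟩
  have hmθ1 : π < ((m:ℝ) + 1) * θ := by
    have h := Nat.lt_floor_add_one (π / θ)
    calc π = (π/θ) * θ := by field_simp
    _ < ((m:ℝ)+1) * θ := by
        apply mul_lt_mul_of_pos_right _ hθ0
        exact_mod_cast h
  have hmθ2 : ((m:ℝ) + 1) * θ < 2 * π := by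
    have h1 : (m:ℝ) ≤ π / θ := Nat.floor_le (by positivity)
    have h3 : ((m:ℝ)+1) * θ ≤ (π/θ + 1) * θ := by
      apply mul_le_mul_of_nonneg_right _ hθ0.le
      linarith
    have h2 : (π/θ + 1) * θ = π + θ := by field_simp
    nlinarith [Real.pi_pos]
  have hsneg : Real.sin (((m:ℝ) + 1) * θ) < 0 := by
    have hp := Real.sin_pos_of_pos_of_lt_pi (x := ((m:ℝ)+1)*θ - π) (by linarith) (by linarith)
    have heq : Real.sin (((m:ℝ)+1)*θ - π) = -Real.sin (((m:ℝ)+1)*θ) := by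
      rw [Real.sin_sub, Real.sin_pi, Real.cos_pi]; ring
    linarith [heq ▸ hp]
  have hk := (key m).1
  nlinarith [pow_pos hsr m, hk, hsneg, hsin, mul_pos (pow_pos hsr m) (neg_pos.mpr hsneg)]
end

section
/- Let n, r be positive integers with r > n²/4, let a_k be the coefficients of the power series 1/(1 - n·z + r·z²), and let k ≥ 2. Then a_j > 0 for all 2 ≤ j ≤ k fails (i.e., a_j ≤ 0 for some j ≤ k) if k ≥ π/arctan(√(4r/n² − 1)) − 1. -/
/-- If `k ≥ π/arctan(√(4r/n² − 1)) − 1` (with `r > n²/4` and `k ≥ 2`), then some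
coefficient `a j`, `j ≤ k`, of the expansion of `1/(1 - n z + r z²)` satisfies `a j ≤ 0`. -/
theorem stmt3 (n r : ℕ) (hn : 0 < n) (hr : (n : ℝ) ^ 2 < 4 * (r : ℝ))
    (a : ℕ → ℝ) (h0 : a 0 = 1) (h1 : a 1 = n)
    (hrec : ∀ k, a (k + 2) = n * a (k + 1) - r * a k)
    (k : ℕ) (hk2 : 2 ≤ k)
    (hk : Real.pi / Real.arctan (Real.sqrt (4 * (r : ℝ) / (n : ℝ) ^ 2 - 1)) - 1 ≤ (k : ℝ)) :
    ∃ j ≤ k, a j ≤ 0 := by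
  have hn' : (0:ℝ) < n := by exact_mod_cast hn
  have hn2 : (0:ℝ) < (n:ℝ)^2 := by positivity
  have hrpos : (0:ℝ) < r := by nlinarith
  set t := Real.sqrt (4 * (r:ℝ) / (n:ℝ)^2 - 1) with ht
  have harg : (0:ℝ) < 4 * r / (n:ℝ)^2 - 1 := by
    rw [sub_pos, lt_div_iff₀ hn2]; linarith
  have htpos : 0 < t := Real.sqrt_pos.mpr harg
  set θ := Real.arctan t with hθ
  have hθpos : 0 < θ := by rw [hθ, ← Real.arctan_zero]; exact Real.arctan_strictMono htpos
  have hθlt : θ < Real.pi / 2 := Real.arctan_lt_pi_div_two t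
  have hπ := Real.pi_pos
  have hsinθ : 0 < Real.sin θ :=
    Real.sin_pos_of_pos_of_lt_pi hθpos (by linarith)
  have hsr : (0:ℝ) < Real.sqrt r := Real.sqrt_pos.mpr hrpos
  have hsq : Real.sqrt r ^ 2 = (r:ℝ) := Real.sq_sqrt hrpos.le
  have ht2 : 1 + t^2 = 4 * r / (n:ℝ)^2 := by
    rw [ht, Real.sq_sqrt harg.le]; ring
  have hsqrt : Real.sqrt (1 + t^2) = 2 * Real.sqrt r / n := by
    rw [ht2, show 4 * (r:ℝ) / (n:ℝ)^2 = (2 * Real.sqrt r / n)^2 by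
      rw [div_pow, mul_pow, hsq]; ring]
    exact Real.sqrt_sq (by positivity)
  have hcos : Real.cos θ = n / (2 * Real.sqrt r) := by
    rw [hθ, Real.cos_arctan, hsqrt]
    rw [one_div_div]
  -- key identity
  have key : ∀ j, a j * Real.sin θ = (Real.sqrt r)^j * Real.sin (((j:ℝ)+1) * θ) := by
    intro j
    induction j using Nat.strong_induction_on with
    | _ j ih =>
      match j with
      | 0 => simp [h0]
      | 1 =>
        rw [h1, show ((1:ℕ):ℝ) + 1 = 2 by norm_num, Real.sin_two_mul, hcos]
        field_simp
      | (m+2) =>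
        have ih1 := ih (m+1) (by omega)
        have ih0 := ih m (by omega)
        have c1 : (((m+1:ℕ)):ℝ) + 1 = (m:ℝ) + 2 := by push_cast; ring
        rw [c1] at ih1
        have s1 : Real.sin (((m:ℝ) + 1) * θ)
            = Real.sin (((m:ℝ)+2)*θ) * Real.cos θ - Real.cos (((m:ℝ)+2)*θ) * Real.sin θ := by
          rw [show ((m:ℝ) + 1) * θ = ((m:ℝ)+2)*θ - θ by ring, Real.sin_sub]
        have s3 : Real.sin (((((m+2:ℕ)):ℝ) + 1) * θ)
            = Real.sin (((m:ℝ)+2)*θ) * Real.cos θ + Real.cos (((m:ℝ)+2)*θ) * Real.sin θ := by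
          rw [show ((((m+2:ℕ)):ℝ) + 1) * θ = ((m:ℝ)+2)*θ + θ by push_cast; ring, Real.sin_add]
        rw [s1] at ih0
        rw [hrec m, s3, hcos]
        have hsrne : Real.sqrt r ≠ 0 := ne_of_gt hsr
        have hcos2 : 2 * Real.sqrt r * Real.cos θ = n := by
          rw [hcos]; field_simp
        field_simp
        linear_combination (2 * Real.sqrt r * Real.sin θ * hsq
          + 2 * Real.sqrt r * (↑n * ih1 - ↑r * ih0)
          + (Real.cos (((m:ℝ)+2)*θ) * Real.sin θ * 2 * Real.sqrt r
             * Real.sqrt r ^ m) * hsq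
          + ((n:ℝ) * Real.sqrt r ^ m * Real.sin (((m:ℝ)+2)*θ)
             - 2 * Real.sqrt r * Real.sin θ
             - 4 * Real.sqrt r * Real.sqrt r ^ m * Real.cos (((m:ℝ)+2)*θ) * Real.sin θ) * hsq
          + (-(r:ℝ) * Real.sqrt r ^ m * Real.sin (((m:ℝ)+2)*θ)) * hcos2)
  -- choose j
  have hπθpos : 0 < Real.pi / θ := div_pos hπ hθpos
  set m := Nat.ceil (Real.pi / θ) with hm
  have hm1 : 1 ≤ m := Nat.one_le_iff_ne_zero.mpr (by
    simp [hm, Nat.ceil_eq_zero, not_le, hπθpos])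
  have hπθk : Real.pi / θ ≤ (k:ℝ) + 1 := by linarith
  have hmk : m ≤ k + 1 := by
    rw [hm]
    have : Real.pi / θ ≤ ((k+1 : ℕ):ℝ) := by push_cast; linarith
    exact Nat.ceil_le.mpr this
  have hlow : Real.pi ≤ (m:ℝ) * θ := by
    have := Nat.le_ceil (Real.pi / θ)
    rw [div_le_iff₀ hθpos] at this
    calc Real.pi ≤ Real.pi / θ * θ := by rw [div_mul_cancel₀]; exact ne_of_gt hθpos
    _ ≤ (m:ℝ) * θ := by
        have := Nat.le_ceil (Real.pi / θ)
        exact mul_le_mul_of_nonneg_right this hθpos.le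
  have hhigh : (m:ℝ) * θ < 2 * Real.pi := by
    have hceil : ((m:ℝ)) < Real.pi / θ + 1 := Nat.ceil_lt_add_one hπθpos.le
    have : (m:ℝ) * θ < (Real.pi / θ + 1) * θ :=
      mul_lt_mul_of_pos_right hceil hθpos
    rw [add_mul, div_mul_cancel₀ _ (ne_of_gt hθpos), one_mul] at this
    linarith
  have hsinm : Real.sin ((m:ℝ) * θ) ≤ 0 := by
    have h1 : 0 ≤ (m:ℝ) * θ - Real.pi := by linarith
    have h2 : (m:ℝ) * θ - Real.pi ≤ Real.pi := by linarith
    have := Real.sin_nonneg_of_nonneg_of_le_pi h1 h2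
    rw [Real.sin_sub_pi] at this
    linarith
  refine ⟨m - 1, by omega, ?_⟩
  have hkey := key (m - 1)
  have hcast : ((m - 1 : ℕ):ℝ) + 1 = (m:ℝ) := by
    have : (1:ℕ) ≤ m := hm1
    push_cast [this]
    ring
  rw [hcast] at hkey
  have hprod : a (m-1) * Real.sin θ ≤ 0 := by
    rw [hkey]
    exact mul_nonpos_of_nonneg_of_nonpos (by positivity) hsinm
  nlinarith [hsinθ, hprod]
end

section
/- Let n = 2s+1 and A = k⟨x₁,…,x_s,y₀,y₁,…,y_s⟩. The 12s² degree-3 elements {y₀h₁(i,j), h₁(i,j)y₀, y₀h₂(i,j), h₂(i,j)y₀, x_iq₁(j), q₁(j)x_i, x_iq₂(j), q₂(j)x_i, y_iq₁(j), q₁(j)y_i, y_iq₂(j), q₂(j)y_i : 1 ≤ i,j ≤ s} are linearly independent in A₃, where h₁(i,j) = x_iy_j, h₂(i,j) = x_ix_j − y_iy_j, q₁(j) = y₀x_j + x_jy₀ + y_jy₀, q₂(j) = y₀y_j + y_jy₀. -/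
noncomputable section

open FreeAlgebra

/-- `x_i`, for `1 ≤ i ≤ s`, among the generators `x₁,…,x_s,y₀,…,y_s`. -/
def xg (k : Type*) [Field k] (s : ℕ) (i : Fin s) : FreeAlgebra k (Fin s ⊕ Fin (s + 1)) :=
  ι k (Sum.inl i)

/-- `y_i`, for `0 ≤ i ≤ s`. -/
def yg (k : Type*) [Field k] (s : ℕ) (i : Fin (s + 1)) : FreeAlgebra k (Fin s ⊕ Fin (s + 1)) :=
  ι k (Sum.inr i)

/-- `h₁(i,j) = x_i y_j`. -/
def h1 (k : Type*) [Field k] (s : ℕ) (i j : Fin s) : FreeAlgebra k (Fin s ⊕ Fin (s + 1)) :=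
  xg k s i * yg k s j.succ

/-- `h₂(i,j) = x_i x_j - y_i y_j`. -/
def h2 (k : Type*) [Field k] (s : ℕ) (i j : Fin s) : FreeAlgebra k (Fin s ⊕ Fin (s + 1)) :=
  xg k s i * xg k s j - yg k s i.succ * yg k s j.succ

/-- `q₁(j) = y₀x_j + x_jy₀ + y_jy₀`. -/
def q1 (k : Type*) [Field k] (s : ℕ) (j : Fin s) : FreeAlgebra k (Fin s ⊕ Fin (s + 1)) :=
  yg k s 0 * xg k s j + xg k s j * yg k s 0 + yg k s j.succ * yg k s 0

/-- `q₂(j) = y₀y_j + y_jy₀`. -/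
def q2 (k : Type*) [Field k] (s : ℕ) (j : Fin s) : FreeAlgebra k (Fin s ⊕ Fin (s + 1)) :=
  yg k s 0 * yg k s j.succ + yg k s j.succ * yg k s 0

/-- The `12s²` degree-3 elements of `y₀`-degree 1. -/
def fam12 (k : Type*) [Field k] (s : ℕ) :
    Fin s × Fin s × Fin 12 → FreeAlgebra k (Fin s ⊕ Fin (s + 1)) :=
  fun p => ![yg k s 0 * h1 k s p.1 p.2.1, h1 k s p.1 p.2.1 * yg k s 0,
             yg k s 0 * h2 k s p.1 p.2.1, h2 k s p.1 p.2.1 * yg k s 0,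
             xg k s p.1 * q1 k s p.2.1, q1 k s p.2.1 * xg k s p.1,
             xg k s p.1 * q2 k s p.2.1, q2 k s p.2.1 * xg k s p.1,
             yg k s p.1.succ * q1 k s p.2.1, q1 k s p.2.1 * yg k s p.1.succ,
             yg k s p.1.succ * q2 k s p.2.1, q2 k s p.2.1 * yg k s p.1.succ] p.2.2

/-! Every element of the family has a *leading word*: a monomial of degree 3 occurring in it with
coefficient 1. Ranking the twelve types of elements suitably, the leading word of an element
occurs in no other element except ones of strictly smaller rank, so the matrix of these
coefficients is unitriangular. -/

theorem linearIndependent_of_triangular {R M ι : Type*} [CommRing R] [NoZeroDivisors R]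
    [AddCommGroup M] [Module R M] {f : ι → M} (φ : ι → Module.Dual R M) (r : ι → ℕ)
    (hdiag : ∀ i, φ i (f i) ≠ 0) (htri : ∀ i j, φ i (f j) ≠ 0 → j = i ∨ r j < r i) :
    LinearIndependent R f := by
  rw [linearIndependent_iff']
  intro s g hg i
  induction hr : r i using Nat.strong_induction_on generalizing i with
  | _ n ih =>
  intro hi
  have hφ : ∑ j ∈ s, g j * φ i (f j) = 0 := by
    simpa using congrArg (φ i) hg
  rw [Finset.sum_eq_single_of_mem i hi] at hφ
  · exact (mul_eq_zero.mp hφ).resolve_right (hdiag i)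
  · intro j hj hji
    by_cases h : φ i (f j) = 0
    · rw [h, mul_zero]
    · obtain rfl | hlt := htri i j h
      · exact absurd rfl hji
      · rw [ih (r j) (hr ▸ hlt) j rfl hj, zero_mul]

namespace FreeAlgebra

theorem basisFreeMonoid_apply (R X : Type*) [CommSemiring R] (w : FreeMonoid X) :
    basisFreeMonoid R X w = FreeMonoid.lift (ι R) w := by
  simp [basisFreeMonoid, equivMonoidAlgebraFreeMonoid]

def wordCoeff (R : Type*) {X : Type*} [CommSemiring R] (w : List X) :
    Module.Dual R (FreeAlgebra R X) :=
  (basisFreeMonoid R X).coord (FreeMonoid.ofList w)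

theorem wordCoeff_ι_mul_ι_mul_ι {R X : Type*} [CommSemiring R] [DecidableEq X]
    (w : List X) (a b c : X) :
    wordCoeff R w (ι R a * ι R b * ι R c) = if [a, b, c] = w then 1 else 0 := by
  have hbasis : ι R a * ι R b * ι R c = basisFreeMonoid R X (FreeMonoid.ofList [a, b, c]) := by
    simp [basisFreeMonoid_apply, mul_assoc]
  classical
  rw [wordCoeff, hbasis, Module.Basis.coord_apply, Module.Basis.repr_self, Finsupp.single_apply]
  exact if_congr FreeMonoid.ofList.apply_eq_iff_eq rfl rfl

end FreeAlgebra

def fam12LeadingWord (s : ℕ) (p : Fin s × Fin s × Fin 12) : List (Fin s ⊕ Fin (s + 1)) :=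
  let a := p.1
  let b := p.2.1
  ![[.inr 0, .inl a, .inr b.succ], [.inl a, .inr b.succ, .inr 0],
    [.inr 0, .inl a, .inl b], [.inl a, .inl b, .inr 0],
    [.inl a, .inr 0, .inl b], [.inr b.succ, .inr 0, .inl a],
    [.inl a, .inr 0, .inr b.succ], [.inr 0, .inr b.succ, .inl a],
    [.inr a.succ, .inl b, .inr 0], [.inr b.succ, .inr 0, .inr a.succ],
    [.inr a.succ, .inr b.succ, .inr 0], [.inr 0, .inr b.succ, .inr a.succ]] p.2.2

def fam12Rank : Fin 12 → ℕ := ![9, 11, 4, 5, 3, 2, 10, 1, 0, 8, 7, 6]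

theorem wordCoeff_fam12LeadingWord_fam12_self (k : Type*) [Field k] (s : ℕ)
    (p : Fin s × Fin s × Fin 12) : wordCoeff k (fam12LeadingWord s p) (fam12 k s p) = 1 := by
  obtain ⟨a, b, t⟩ := p
  fin_cases t <;>
    simp [fam12LeadingWord, fam12, h1, h2, q1, q2, xg, yg, mul_add, add_mul, mul_sub, sub_mul,
      ← mul_assoc, wordCoeff_ι_mul_ι_mul_ι]

theorem eq_or_fam12Rank_lt_of_wordCoeff_ne_zero (k : Type*) [Field k] (s : ℕ)
    (p q : Fin s × Fin s × Fin 12) (h : wordCoeff k (fam12LeadingWord s p) (fam12 k s q) ≠ 0) :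
    q = p ∨ fam12Rank q.2.2 < fam12Rank p.2.2 := by
  obtain ⟨a, b, t⟩ := p
  obtain ⟨i, j, u⟩ := q
  fin_cases t <;> fin_cases u <;> simp [fam12Rank] <;>
    simp [fam12LeadingWord, fam12, h1, h2, q1, q2, xg, yg, mul_add, add_mul, mul_sub, sub_mul,
      ← mul_assoc, wordCoeff_ι_mul_ι_mul_ι] at h <;>
    tauto

theorem stmt12_general (k : Type*) [Field k] (s : ℕ) :
    LinearIndependent k (fam12 k s) :=
  linearIndependent_of_triangular (fun p => wordCoeff k (fam12LeadingWord s p))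
    (fun p => fam12Rank p.2.2)
    (fun p => by simp [wordCoeff_fam12LeadingWord_fam12_self])
    (eq_or_fam12Rank_lt_of_wordCoeff_ne_zero k s)

/-- The `12s²` degree-3 elements listed in `fam12` are linearly independent. -/
theorem stmt12 (k : Type*) [Field k] (s : ℕ) (hs : 0 < s) :
    LinearIndependent k (fam12 k s) :=
  stmt12_general k s
end
end
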